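/- Variance collapse of the value sum: for a finite-horizon MDP with rewards bounded in [0, R_max], ∑_{t=1}^H E_π[Var[V^π_{t+1}(s_{t+1}) + r_t | s_t, a_t]] ≤ H^2 R_max^2, i.e. the sum of H conditional-variance terms (each potentially of order H^2 R_max^2) is bounded by H^2 R_max^2 with no extra factor of H. -/
import Mathlib

/-- Gauss-type sum: `∑_{i<n} (2i+1) = n²` in `ℝ`. -/
lemma odd_sum_sq (n : ℕ) : ∑ i ∈ Finset.range n, (2 * (i : ℝ) + 1) = (n : ℝ) ^ 2 := by
  induction n with
  | zero => simp
  | succ n ih => rw [Finset.sum_range_succ, ih]; push_cast; ring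

/-- Variance collapse of the value sum: for a finite-horizon MDP with rewards
in `[0, Rmax]`, the sum over `t` of
`E_π[Var[V_{t+1}(s_{t+1}) + r_t | s_t, a_t]]` is at most `H^2 Rmax^2`. -/
theorem variance_collapse
    {S A : Type*} [Fintype S] [Fintype A] (H : ℕ) (Rmax : ℝ) (hRmax : 0 ≤ Rmax)
    (d1 : S → ℝ) (π : Fin H → S → A → ℝ) (P : Fin H → S → A → S → ℝ)
    (r : Fin H → S → A → ℝ)
    (hd1 : (∀ s, 0 ≤ d1 s) ∧ ∑ s, d1 s = 1)
    (hπ : ∀ t s, (∀ a, 0 ≤ π t s a) ∧ ∑ a, π t s a = 1)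
    (hP : ∀ t s a, (∀ s', 0 ≤ P t s a s') ∧ ∑ s', P t s a s' = 1)
    (hr : ∀ t s a, 0 ≤ r t s a ∧ r t s a ≤ Rmax)
    -- value functions with the convention V_{H+1} = 0
    (V : Fin (H + 1) → S → ℝ)
    (hVlast : ∀ s, V (Fin.last H) s = 0)
    (hV : ∀ (t : Fin H) (s : S),
      V t.castSucc s = ∑ a, π t s a * (r t s a + ∑ s', P t s a s' * V t.succ s'))
    -- marginal state distributions
    (d : Fin (H + 1) → S → ℝ)
    (hd0 : d 0 = d1)
    (hdrec : ∀ (t : Fin H) (s' : S),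
      d t.succ s' = ∑ s, ∑ a, d t.castSucc s * π t s a * P t s a s') :
    ∑ t : Fin H, ∑ s, ∑ a, d t.castSucc s * π t s a *
        ((∑ s', P t s a s' * (r t s a + V t.succ s') ^ 2)
          - (∑ s', P t s a s' * (r t s a + V t.succ s')) ^ 2)
      ≤ H ^ 2 * Rmax ^ 2 := by
  obtain ⟨hd1n, hd1s⟩ := hd1
  -- nonnegativity of marginals
  have hdnn : ∀ (u : Fin (H + 1)) (s : S), 0 ≤ d u s := by
    intro u
    induction u using Fin.induction with
    | zero => intro s; rw [hd0]; exact hd1n s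
    | succ t ih =>
      intro s'
      rw [hdrec]
      refine Finset.sum_nonneg fun s _ => Finset.sum_nonneg fun a _ => ?_
      exact mul_nonneg (mul_nonneg (ih s) ((hπ t s).1 a)) ((hP t s a).1 s')
  -- marginals sum to one
  have hdsum : ∀ u : Fin (H + 1), ∑ s, d u s = 1 := by
    intro u
    induction u using Fin.induction with
    | zero => rw [hd0]; exact hd1s
    | succ t ih =>
      calc ∑ s', d t.succ s'
          = ∑ s', ∑ s, ∑ a, d t.castSucc s * π t s a * P t s a s' := by
            exact Finset.sum_congr rfl fun s' _ => hdrec t s'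
        _ = ∑ s, ∑ s', ∑ a, d t.castSucc s * π t s a * P t s a s' :=
            Finset.sum_comm
        _ = ∑ s, ∑ a, ∑ s', d t.castSucc s * π t s a * P t s a s' :=
            Finset.sum_congr rfl fun s _ => Finset.sum_comm
        _ = ∑ s, ∑ a, d t.castSucc s * π t s a := by
            refine Finset.sum_congr rfl fun s _ => Finset.sum_congr rfl fun a _ => ?_
            rw [← Finset.mul_sum, (hP t s a).2, mul_one]
        _ = ∑ s, d t.castSucc s := by
            refine Finset.sum_congr rfl fun s _ => ?_
            rw [← Finset.mul_sum, (hπ t s).2, mul_one]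
        _ = 1 := ih
  -- value bounds: 0 ≤ V_u ≤ (H - u) Rmax
  have hVb : ∀ k : ℕ, ∀ u : Fin (H + 1), H - u.val ≤ k →
      ∀ s, 0 ≤ V u s ∧ V u s ≤ ((H - u.val : ℕ) : ℝ) * Rmax := by
    intro k
    induction k with
    | zero =>
      intro u hu s
      have hval : u.val = H := by have := u.isLt; omega
      have : u = Fin.last H := Fin.ext hval
      subst this
      rw [hVlast]
      simp
    | succ k ih =>
      intro u hu s
      by_cases hlast : u.val = H
      · have : u = Fin.last H := Fin.ext hlast
        subst this
        rw [hVlast]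
        constructor
        · exact le_refl 0
        · positivity
      · have hlt : u.val < H := lt_of_le_of_ne (by have := u.isLt; omega) hlast
        set t : Fin H := ⟨u.val, hlt⟩ with ht
        have hcast : t.castSucc = u := Fin.ext rfl
        have hsv : (t.succ : Fin (H + 1)).val = u.val + 1 := rfl
        have hsucc : H - (t.succ : Fin (H + 1)).val ≤ k := by rw [hsv]; omega
        have ihs := ih t.succ hsucc
        -- bound each r + E[V'] term
        have hterm : ∀ a, 0 ≤ r t s a + ∑ s', P t s a s' * V t.succ s' ∧
            r t s a + ∑ s', P t s a s' * V t.succ s' ≤ ((H - u.val : ℕ) : ℝ) * Rmax := by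
          intro a
          have hEVnn : 0 ≤ ∑ s', P t s a s' * V t.succ s' :=
            Finset.sum_nonneg fun s' _ => mul_nonneg ((hP t s a).1 s') (ihs s').1
          have hEVle : ∑ s', P t s a s' * V t.succ s'
              ≤ ((H - (u.val + 1) : ℕ) : ℝ) * Rmax := by
            calc ∑ s', P t s a s' * V t.succ s'
                ≤ ∑ s', P t s a s' * (((H - (u.val + 1) : ℕ) : ℝ) * Rmax) := by
                  refine Finset.sum_le_sum fun s' _ => ?_
                  refine mul_le_mul_of_nonneg_left ?_ ((hP t s a).1 s')
                  have := (ihs s').2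
                  rwa [hsv] at this
              _ = ((H - (u.val + 1) : ℕ) : ℝ) * Rmax := by
                  rw [← Finset.sum_mul, (hP t s a).2, one_mul]
          have hc : ((H - (u.val + 1) : ℕ) : ℝ) = ((H - u.val : ℕ) : ℝ) - 1 := by
            have h1 : H - (u.val + 1) + 1 = H - u.val := by omega
            have := congrArg (fun n : ℕ => (n : ℝ)) h1
            push_cast at this
            linarith
          constructor
          · exact add_nonneg (hr t s a).1 hEVnn
          · have := (hr t s a).2
            rw [hc] at hEVle
            have h2 : (1 : ℝ) ≤ ((H - u.val : ℕ) : ℝ) := by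
              have : 1 ≤ H - u.val := by omega
              exact_mod_cast this
            nlinarith
        rw [← hcast, hV t s]
        constructor
        · exact Finset.sum_nonneg fun a _ => mul_nonneg ((hπ t s).1 a) (hterm a).1
        · calc ∑ a, π t s a * (r t s a + ∑ s', P t s a s' * V t.succ s')
              ≤ ∑ a, π t s a * (((H - u.val : ℕ) : ℝ) * Rmax) :=
                Finset.sum_le_sum fun a _ =>
                  mul_le_mul_of_nonneg_left (hterm a).2 ((hπ t s).1 a)
            _ = ((H - u.val : ℕ) : ℝ) * Rmax := by
                rw [← Finset.sum_mul, (hπ t s).2, one_mul]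
  -- second moments of V under the marginals
  set m : Fin (H + 1) → ℝ := fun u => ∑ s, d u s * V u s ^ 2 with hm
  -- the key per-step bound
  have step : ∀ t : Fin H,
      ∑ s, ∑ a, d t.castSucc s * π t s a *
        ((∑ s', P t s a s' * (r t s a + V t.succ s') ^ 2)
          - (∑ s', P t s a s' * (r t s a + V t.succ s')) ^ 2)
      ≤ m t.succ - m t.castSucc + (2 * ((H : ℝ) - t.val) - 1) * Rmax ^ 2 := by
    intro t
    set EV : S → A → ℝ := fun s a => ∑ s', P t s a s' * V t.succ s' with hEV
    set EV2 : S → A → ℝ := fun s a => ∑ s', P t s a s' * V t.succ s' ^ 2 with hEV2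
    have e1 : ∀ s a, (∑ s', P t s a s' * (r t s a + V t.succ s') ^ 2)
        = r t s a ^ 2 + 2 * r t s a * EV s a + EV2 s a := by
      intro s a
      calc ∑ s', P t s a s' * (r t s a + V t.succ s') ^ 2
          = ∑ s', (r t s a ^ 2 * P t s a s' + 2 * r t s a * (P t s a s' * V t.succ s')
              + P t s a s' * V t.succ s' ^ 2) :=
            Finset.sum_congr rfl fun s' _ => by ring
        _ = r t s a ^ 2 * (∑ s', P t s a s') + 2 * r t s a * EV s a + EV2 s a := by
            rw [Finset.sum_add_distrib, Finset.sum_add_distrib, ← Finset.mul_sum,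
              ← Finset.mul_sum]
        _ = _ := by rw [(hP t s a).2]; ring
    have e2 : ∀ s a, (∑ s', P t s a s' * (r t s a + V t.succ s')) = r t s a + EV s a := by
      intro s a
      calc ∑ s', P t s a s' * (r t s a + V t.succ s')
          = ∑ s', (r t s a * P t s a s' + P t s a s' * V t.succ s') :=
            Finset.sum_congr rfl fun s' _ => by ring
        _ = r t s a * (∑ s', P t s a s') + EV s a := by
            rw [Finset.sum_add_distrib, ← Finset.mul_sum]
        _ = _ := by rw [(hP t s a).2]; ring
    have hVsuccnn : ∀ s', 0 ≤ V t.succ s' := fun s' =>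
      (hVb H t.succ (by omega) s').1
    have hVsuccle : ∀ s', V t.succ s' ≤ ((H - (t.val + 1) : ℕ) : ℝ) * Rmax := fun s' =>
      (hVb H t.succ (by omega) s').2
    have hEVnn : ∀ s a, 0 ≤ EV s a := fun s a =>
      Finset.sum_nonneg fun s' _ => mul_nonneg ((hP t s a).1 s') (hVsuccnn s')
    have hEVle : ∀ s a, EV s a ≤ ((H : ℝ) - t.val - 1) * Rmax := by
      intro s a
      have hc : ((H - (t.val + 1) : ℕ) : ℝ) = (H : ℝ) - t.val - 1 := by
        have ht := t.isLt
        have : ((H - (t.val + 1) : ℕ) : ℝ) = (H : ℝ) - ((t.val + 1 : ℕ) : ℝ) :=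
          Nat.cast_sub (by omega)
        rw [this]; push_cast; ring
      calc EV s a ≤ ∑ s', P t s a s' * (((H - (t.val + 1) : ℕ) : ℝ) * Rmax) :=
            Finset.sum_le_sum fun s' _ =>
              mul_le_mul_of_nonneg_left (hVsuccle s') ((hP t s a).1 s')
        _ = ((H - (t.val + 1) : ℕ) : ℝ) * Rmax := by
            rw [← Finset.sum_mul, (hP t s a).2, one_mul]
        _ = ((H : ℝ) - t.val - 1) * Rmax := by rw [hc]
    -- split the sum into three parts
    have hsplit : ∑ s, ∑ a, d t.castSucc s * π t s a *
        ((∑ s', P t s a s' * (r t s a + V t.succ s') ^ 2)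
          - (∑ s', P t s a s' * (r t s a + V t.succ s')) ^ 2)
        = (∑ s, ∑ a, d t.castSucc s * π t s a * EV2 s a)
          + (∑ s, ∑ a, d t.castSucc s * π t s a * (r t s a ^ 2 + 2 * r t s a * EV s a))
          - ∑ s, ∑ a, d t.castSucc s * π t s a * (r t s a + EV s a) ^ 2 := by
      calc ∑ s, ∑ a, d t.castSucc s * π t s a *
          ((∑ s', P t s a s' * (r t s a + V t.succ s') ^ 2)
            - (∑ s', P t s a s' * (r t s a + V t.succ s')) ^ 2)
          = ∑ s, ∑ a, (d t.castSucc s * π t s a * EV2 s a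
              + d t.castSucc s * π t s a * (r t s a ^ 2 + 2 * r t s a * EV s a)
              - d t.castSucc s * π t s a * (r t s a + EV s a) ^ 2) := by
            refine Finset.sum_congr rfl fun s _ => Finset.sum_congr rfl fun a _ => ?_
            rw [e1, e2]; ring
        _ = _ := by simp only [Finset.sum_add_distrib, Finset.sum_sub_distrib]
    rw [hsplit]
    -- part 1: equals m t.succ
    have hP1 : (∑ s, ∑ a, d t.castSucc s * π t s a * EV2 s a) = m t.succ := by
      calc ∑ s, ∑ a, d t.castSucc s * π t s a * EV2 s a
          = ∑ s, ∑ a, ∑ s', d t.castSucc s * π t s a * P t s a s' * V t.succ s' ^ 2 := by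
            refine Finset.sum_congr rfl fun s _ => Finset.sum_congr rfl fun a _ => ?_
            rw [hEV2, Finset.mul_sum]
            exact Finset.sum_congr rfl fun s' _ => by ring
        _ = ∑ s, ∑ s', ∑ a, d t.castSucc s * π t s a * P t s a s' * V t.succ s' ^ 2 :=
            Finset.sum_congr rfl fun s _ => Finset.sum_comm
        _ = ∑ s', ∑ s, ∑ a, d t.castSucc s * π t s a * P t s a s' * V t.succ s' ^ 2 :=
            Finset.sum_comm
        _ = ∑ s', d t.succ s' * V t.succ s' ^ 2 := by
            refine Finset.sum_congr rfl fun s' _ => ?_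
            rw [hdrec t s', Finset.sum_mul]
            exact Finset.sum_congr rfl fun s _ => by rw [Finset.sum_mul]
        _ = m t.succ := rfl
    -- part 2: bounded by (2(H - t) - 1) Rmax²
    have hP2 : (∑ s, ∑ a, d t.castSucc s * π t s a * (r t s a ^ 2 + 2 * r t s a * EV s a))
        ≤ (2 * ((H : ℝ) - t.val) - 1) * Rmax ^ 2 := by
      have hC : ∀ s a, r t s a ^ 2 + 2 * r t s a * EV s a
          ≤ (2 * ((H : ℝ) - t.val) - 1) * Rmax ^ 2 := by
        intro s a
        have h1 := (hr t s a).1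
        have h2 := (hr t s a).2
        have h3 := hEVnn s a
        have h4 := hEVle s a
        nlinarith [mul_le_mul_of_nonneg_left h4 (mul_nonneg (by norm_num : (0:ℝ) ≤ 2) h1)]
      calc ∑ s, ∑ a, d t.castSucc s * π t s a * (r t s a ^ 2 + 2 * r t s a * EV s a)
          ≤ ∑ s, ∑ a, d t.castSucc s * π t s a * ((2 * ((H : ℝ) - t.val) - 1) * Rmax ^ 2) := by
            refine Finset.sum_le_sum fun s _ => Finset.sum_le_sum fun a _ => ?_
            exact mul_le_mul_of_nonneg_left (hC s a)
              (mul_nonneg (hdnn t.castSucc s) ((hπ t s).1 a))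
        _ = (2 * ((H : ℝ) - t.val) - 1) * Rmax ^ 2 := by
            have : ∀ s, ∑ a, d t.castSucc s * π t s a * ((2 * ((H : ℝ) - t.val) - 1) * Rmax ^ 2)
                = d t.castSucc s * ((2 * ((H : ℝ) - t.val) - 1) * Rmax ^ 2) := by
              intro s
              rw [← Finset.sum_mul, ← Finset.mul_sum, (hπ t s).2, mul_one]
            rw [Finset.sum_congr rfl fun s _ => this s, ← Finset.sum_mul,
              hdsum t.castSucc, one_mul]
    -- part 3: at least m t.castSucc (Jensen / Cauchy-Schwarz)
    have hP3 : m t.castSucc ≤ ∑ s, ∑ a, d t.castSucc s * π t s a * (r t s a + EV s a) ^ 2 := by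
      refine Finset.sum_le_sum fun s _ => ?_
      have hjensen : (V t.castSucc s) ^ 2 ≤ ∑ a, π t s a * (r t s a + EV s a) ^ 2 := by
        have hcs := Finset.sum_mul_sq_le_sq_mul_sq Finset.univ
          (fun a => Real.sqrt (π t s a)) (fun a => Real.sqrt (π t s a) * (r t s a + EV s a))
        have hl : ∀ a, Real.sqrt (π t s a) * (Real.sqrt (π t s a) * (r t s a + EV s a))
            = π t s a * (r t s a + EV s a) := by
          intro a
          rw [← mul_assoc, Real.mul_self_sqrt ((hπ t s).1 a)]
        have hr2 : ∀ a, (Real.sqrt (π t s a)) ^ 2 = π t s a := fun a =>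
          Real.sq_sqrt ((hπ t s).1 a)
        have hr3 : ∀ a, (Real.sqrt (π t s a) * (r t s a + EV s a)) ^ 2
            = π t s a * (r t s a + EV s a) ^ 2 := by
          intro a
          rw [mul_pow, hr2]
        rw [Finset.sum_congr rfl fun a _ => hl a,
          Finset.sum_congr rfl fun a _ => hr2 a,
          Finset.sum_congr rfl fun a _ => hr3 a, (hπ t s).2, one_mul] at hcs
        have hVeq : V t.castSucc s = ∑ a, π t s a * (r t s a + EV s a) := by
          rw [hV t s]
        rw [hVeq]
        exact hcs
      calc d t.castSucc s * V t.castSucc s ^ 2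
          ≤ d t.castSucc s * ∑ a, π t s a * (r t s a + EV s a) ^ 2 :=
            mul_le_mul_of_nonneg_left hjensen (hdnn t.castSucc s)
        _ = ∑ a, d t.castSucc s * π t s a * (r t s a + EV s a) ^ 2 := by
            rw [Finset.mul_sum]
            exact Finset.sum_congr rfl fun a _ => by ring
    linarith
  -- assemble: telescoping + Gauss sum
  have htel : ∑ t : Fin H, (m t.succ - m t.castSucc) = m (Fin.last H) - m 0 := by
    let g : ℕ → ℝ := fun i => m ⟨min i H, by omega⟩
    have h1 : ∀ t : Fin H, m t.succ - m t.castSucc = g (t.val + 1) - g t.val := by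
      intro t
      have ht := t.isLt
      have e1 : g (t.val + 1) = m t.succ :=
        congrArg m (by apply Fin.ext; simp only [Fin.val_succ, Fin.val_mk]; omega)
      have e2 : g t.val = m t.castSucc :=
        congrArg m (by apply Fin.ext; simp only [Fin.coe_castSucc, Fin.val_mk]; omega)
      rw [e1, e2]
    calc ∑ t : Fin H, (m t.succ - m t.castSucc)
        = ∑ t : Fin H, (g (t.val + 1) - g t.val) :=
          Finset.sum_congr rfl fun t _ => h1 t
      _ = ∑ i ∈ Finset.range H, (g (i + 1) - g i) :=
          Fin.sum_univ_eq_sum_range (fun i => g (i + 1) - g i) H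
      _ = g H - g 0 := Finset.sum_range_sub g H
      _ = m (Fin.last H) - m 0 := by
          have e3 : g H = m (Fin.last H) :=
            congrArg m (by apply Fin.ext; simp only [Fin.val_last, Fin.val_mk]; omega)
          have e4 : g 0 = m 0 :=
            congrArg m (by apply Fin.ext; simp only [Fin.val_zero, Fin.val_mk]; omega)
          rw [e3, e4]
  have hmlast : m (Fin.last H) = 0 := by
    rw [hm]; simp [hVlast]
  have hm0 : 0 ≤ m 0 :=
    Finset.sum_nonneg fun s _ => mul_nonneg (hdnn 0 s) (sq_nonneg _)
  have hgauss : ∑ t : Fin H, (2 * ((H : ℝ) - t.val) - 1) * Rmax ^ 2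
      = (H : ℝ) ^ 2 * Rmax ^ 2 := by
    calc ∑ t : Fin H, (2 * ((H : ℝ) - t.val) - 1) * Rmax ^ 2
        = ∑ i ∈ Finset.range H, (2 * ((H : ℝ) - i) - 1) * Rmax ^ 2 :=
          Fin.sum_univ_eq_sum_range (fun i => (2 * ((H : ℝ) - i) - 1) * Rmax ^ 2) H
      _ = ∑ i ∈ Finset.range H, (2 * ((H - 1 - i : ℕ) : ℝ) + 1) * Rmax ^ 2 := by
          refine Finset.sum_congr rfl fun i hi => ?_
          have hi' : i < H := Finset.mem_range.mp hi
          have : ((H - 1 - i : ℕ) : ℝ) = (H : ℝ) - 1 - i := by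
            have : ((H - 1 - i : ℕ) : ℝ) = ((H : ℕ) : ℝ) - ((1 + i : ℕ) : ℝ) := by
              rw [Nat.sub_sub]
              exact Nat.cast_sub (by omega)
            rw [this]; push_cast; ring
          rw [this]; ring
      _ = ∑ i ∈ Finset.range H, (2 * (i : ℝ) + 1) * Rmax ^ 2 :=
          Finset.sum_range_reflect (fun i => (2 * (i : ℝ) + 1) * Rmax ^ 2) H
      _ = (H : ℝ) ^ 2 * Rmax ^ 2 := by
          rw [← Finset.sum_mul, odd_sum_sq]
  calc ∑ t : Fin H, ∑ s, ∑ a, d t.castSucc s * π t s a *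
        ((∑ s', P t s a s' * (r t s a + V t.succ s') ^ 2)
          - (∑ s', P t s a s' * (r t s a + V t.succ s')) ^ 2)
      ≤ ∑ t : Fin H, (m t.succ - m t.castSucc + (2 * ((H : ℝ) - t.val) - 1) * Rmax ^ 2) :=
        Finset.sum_le_sum fun t _ => step t
    _ = (∑ t : Fin H, (m t.succ - m t.castSucc))
        + ∑ t : Fin H, (2 * ((H : ℝ) - t.val) - 1) * Rmax ^ 2 :=
        Finset.sum_add_distrib
    _ = (m (Fin.last H) - m 0) + (H : ℝ) ^ 2 * Rmax ^ 2 := by rw [htel, hgauss]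
    _ ≤ (H : ℝ) ^ 2 * Rmax ^ 2 := by rw [hmlast]; linarith
    _ = (H : ℕ) ^ 2 * Rmax ^ 2 := by norm_num
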